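/- Let a ≥ 1 and let F_a: [0, ∞) → ℝ be the unique continuous solution of F_a(z) = 1 − (1/a)∫₀^z F_a(u) ω((e^{z−u} − 1)/a) du, where ω is Buchstab's function. Then F_a(z) = 1 for 0 ≤ z ≤ log(a+1), and for z > log(a+1), F_a(z) is determined by the values of F_a on [0, z − log(a+1)]; in particular the equation has a unique continuous solution on [0, ∞). -/

import Mathlib

open scoped Classical ENNReal

noncomputable section

/-- `ω` is Buchstab's function: `ω(u) = 0` for `u < 1`, `u·ω(u) = 1` on `[1,2]`,
`(u·ω(u))' = ω(u-1)` for `u > 2`, and `ω` is continuous on `[1, ∞)`. -/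
def IsBuchstab (ω : ℝ → ℝ) : Prop :=
  (∀ u < (1 : ℝ), ω u = 0) ∧
  (∀ u ∈ Set.Icc (1 : ℝ) 2, u * ω u = 1) ∧
  (∀ u > (2 : ℝ), HasDerivAt (fun t => t * ω t) (ω (u - 1)) u) ∧
  ContinuousOn ω (Set.Ici 1)

end
/-- The functional-equation property defining `F_a` on `[0, ∞)`. -/
def IsFa (ω : ℝ → ℝ) (a : ℝ) (F : ℝ → ℝ) : Prop :=
  ContinuousOn F (Set.Ici 0) ∧
    ∀ z : ℝ, 0 ≤ z →
      F z = 1 - (1 / a) * ∫ u in (0 : ℝ)..z, F u * ω ((Real.exp (z - u) - 1) / a)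

/-!
The kernel `K t = ω((eᵗ - 1)/a)/a` vanishes for `t < L := log (a + 1)`, so the equation
`F = T F`, `T f z = 1 - ∫₀^z f(u) K(z - u) du`, has delay `L`: `T f = 1` on `[0, L]`, and `T f`
on `[0, c + L]` only depends on `f` on `[0, c]`. Uniqueness follows by the method of steps, and
the iterates `Tᵐ 1` with `m ≥ n` all agree on `[0, n L]`, which defines the solution. `T`
preserves continuity although `K` jumps at `L`: with `K̃ t := K (max L t)` continuous,
`∫₀^z f(u) K(z - u) du = ∫₀^{max (z - L) 0} f(u) K̃(z - u) du`.
-/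

open Set Filter Topology
open scoped Interval

section Volterra

variable {g K f f' : ℝ → ℝ} {L : ℝ}

noncomputable def volterraMap (g K f : ℝ → ℝ) (z : ℝ) : ℝ :=
  g z - ∫ u in (0 : ℝ)..z, f u * K (z - u)

lemma integral_mul_sub_eq_integral_max_sub (hL : 0 ≤ L) (hK : ∀ t < L, K t = 0)
    (hf : Continuous f) (hKc : Continuous fun t => K (max L t)) (z : ℝ) :
    ∫ u in (0 : ℝ)..z, f u * K (z - u) =
      ∫ u in (0 : ℝ)..max (z - L) 0, f u * K (max L (z - u)) := by
  have hzero : ∀ u, z - L < u → f u * K (z - u) = 0 := fun u hu => by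
    rw [hK _ (by linarith), mul_zero]
  rcases le_or_gt (z - L) 0 with hc | hc
  · rw [max_eq_right hc, intervalIntegral.integral_same]
    refine intervalIntegral.integral_zero_ae (Eventually.of_forall fun u hu => hzero u ?_)
    rcases min_lt_iff.mp hu.1 with h | h <;> linarith
  · have hagree : EqOn (fun u => f u * K (max L (z - u))) (fun u => f u * K (z - u))
        (Iic (z - L)) := fun u hu => by
      simp only [max_eq_right (show L ≤ z - u by linarith [mem_Iic.mp hu])]
    have hcont : Continuous fun u => f u * K (max L (z - u)) :=
      hf.mul (hKc.comp (continuous_const.sub continuous_id))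
    have hvanish : EqOn (fun _ => (0 : ℝ)) (fun u => f u * K (z - u)) (Ι (z - L) z) :=
      fun u hu => by
        rw [uIoc_of_le (by linarith : z - L ≤ z)] at hu; exact (hzero u hu.1).symm
    rw [max_eq_left hc.le, ← intervalIntegral.integral_add_adjacent_intervals
      ((hcont.intervalIntegrable 0 (z - L)).congr
        (hagree.mono fun u hu => by rw [uIoc_of_le hc.le] at hu; exact hu.2))
      (intervalIntegrable_const.congr hvanish),
      ← intervalIntegral.integral_congr_ae (Eventually.of_forall fun u hu => hvanish hu),
      intervalIntegral.integral_zero, add_zero]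
    exact intervalIntegral.integral_congr fun u hu => by
      rw [uIcc_of_le hc.le] at hu; exact (hagree hu.2).symm

lemma continuous_volterraMap (hL : 0 ≤ L) (hK : ∀ t < L, K t = 0) (hKc : ContinuousOn K (Ici L))
    (hg : Continuous g) (hf : Continuous f) : Continuous (volterraMap g K f) := by
  have hKc' : Continuous fun t => K (max L t) :=
    hKc.comp_continuous (continuous_const.max continuous_id) fun t => le_max_left L t
  unfold volterraMap
  simp_rw [integral_mul_sub_eq_integral_max_sub hL hK hf hKc']
  refine hg.sub (intervalIntegral.continuous_parametric_intervalIntegral_of_continuous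
    (f := fun z u => f u * K (max L (z - u))) ?_ (by fun_prop))
  exact (hf.comp continuous_snd).mul (hKc'.comp (continuous_fst.sub continuous_snd))

lemma volterraMap_eqOn_Icc_zero (hK : ∀ t < L, K t = 0) (f : ℝ → ℝ) :
    EqOn (volterraMap g K f) g (Icc 0 L) := fun z hz => by
  rw [volterraMap, intervalIntegral.integral_zero_ae, sub_zero]
  refine Eventually.of_forall fun u hu => ?_
  rw [uIoc_of_le hz.1] at hu
  rw [hK _ (by linarith [hu.1, hz.2]), mul_zero]

lemma volterraMap_eqOn_of_eqOn (hK : ∀ t < L, K t = 0) {c : ℝ} (h : EqOn f f' (Icc 0 c)) :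
    EqOn (volterraMap g K f) (volterraMap g K f') (Icc 0 (c + L)) := fun z hz => by
  rw [volterraMap, volterraMap, intervalIntegral.integral_congr fun u hu => ?_]
  rw [uIcc_of_le hz.1] at hu
  rcases le_or_gt u (z - L) with hu' | hu'
  · simp only [h ⟨hu.1, by linarith [hz.2]⟩]
  · simp only [hK _ (by linarith : z - u < L), mul_zero]

lemma iterate_volterraMap_eqOn (hK : ∀ t < L, K t = 0) (n : ℕ) (f f' : ℝ → ℝ) :
    EqOn ((volterraMap g K)^[n + 1] f) ((volterraMap g K)^[n + 1] f') (Icc 0 ((n + 1) * L)) := by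
  induction n with
  | zero =>
    simpa using (volterraMap_eqOn_Icc_zero hK f).trans
      (volterraMap_eqOn_Icc_zero hK f').symm
  | succ n ih =>
    rw [Function.iterate_succ_apply' _ (n + 1), Function.iterate_succ_apply' _ (n + 1)]
    convert volterraMap_eqOn_of_eqOn hK ih using 2
    push_cast
    ring

lemma iterate_volterraMap_eqOn_of_le (hK : ∀ t < L, K t = 0) {m n : ℕ}
    (hnm : n ≤ m) (f : ℝ → ℝ) :
    EqOn ((volterraMap g K)^[m + 1] f) ((volterraMap g K)^[n + 1] f) (Icc 0 ((n + 1) * L)) := by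
  obtain ⟨j, rfl⟩ := Nat.exists_eq_add_of_le hnm
  rw [show n + j + 1 = n + 1 + j by omega, Function.iterate_add_apply]
  exact iterate_volterraMap_eqOn hK n _ f

lemma eqOn_of_eqOn_volterraMap (hL : 0 < L) (hK : ∀ t < L, K t = 0) {F G : ℝ → ℝ}
    (hF : EqOn F (volterraMap g K F) (Ici 0)) (hG : EqOn G (volterraMap g K G) (Ici 0)) :
    EqOn F G (Ici 0) := by
  have steps : ∀ n : ℕ, EqOn F G (Icc 0 (n * L)) := by
    intro n
    induction n with
    | zero =>
      intro z hz
      obtain rfl : z = 0 := by simpa using hz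
      rw [hF self_mem_Ici, hG self_mem_Ici, volterraMap_eqOn_Icc_zero hK F ⟨le_rfl, hL.le⟩,
        volterraMap_eqOn_Icc_zero hK G ⟨le_rfl, hL.le⟩]
    | succ n ih =>
      intro z hz
      rw [hF hz.1, hG hz.1]
      exact volterraMap_eqOn_of_eqOn hK ih ⟨hz.1, by push_cast at hz; linarith [hz.2]⟩
  intro z hz
  obtain ⟨n, hn⟩ := exists_nat_ge (z / L)
  exact steps n ⟨hz, (div_le_iff₀ hL).mp hn⟩

noncomputable def volterraSol (g K : ℝ → ℝ) (L z : ℝ) : ℝ :=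
  (volterraMap g K)^[⌊z / L⌋₊ + 1] g z

lemma lt_floor_div_add_one_mul (hL : 0 < L) (z : ℝ) : z < (⌊z / L⌋₊ + 1) * L :=
  (div_lt_iff₀ hL).mp (Nat.lt_floor_add_one _)

lemma volterraSol_eqOn_iterate (hL : 0 < L) (hK : ∀ t < L, K t = 0) (n : ℕ) :
    EqOn (volterraSol g K L) ((volterraMap g K)^[n + 1] g) (Icc 0 ((n + 1) * L)) := fun z hz => by
  set m := ⌊z / L⌋₊
  have hzm : z ∈ Icc 0 ((m + 1) * L) := ⟨hz.1, (lt_floor_div_add_one_mul hL z).le⟩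
  calc volterraSol g K L z = (volterraMap g K)^[max m n + 1] g z :=
        (iterate_volterraMap_eqOn_of_le hK (le_max_left m n) g hzm).symm
    _ = (volterraMap g K)^[n + 1] g z := iterate_volterraMap_eqOn_of_le hK (le_max_right m n) g hz

lemma continuousOn_volterraSol (hL : 0 < L) (hK : ∀ t < L, K t = 0)
    (hKc : ContinuousOn K (Ici L)) (hg : Continuous g) :
    ContinuousOn (volterraSol g K L) (Ici 0) := by
  have hcont : ∀ n, Continuous ((volterraMap g K)^[n] g) := by
    intro n
    induction n with
    | zero => exact hg
    | succ n ih =>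
      rw [Function.iterate_succ_apply']
      exact continuous_volterraMap hL.le hK hKc hg ih
  intro z hz
  have hnhds : Icc 0 ((⌊z / L⌋₊ + 1) * L) ∈ 𝓝[Ici 0] z :=
    inter_mem_nhdsWithin _ (Iic_mem_nhds (lt_floor_div_add_one_mul hL z))
  exact (hcont _).continuousWithinAt.congr_of_eventuallyEq
    (eventually_of_mem hnhds (volterraSol_eqOn_iterate hL hK _)) (volterraSol_eqOn_iterate hL hK _
      ⟨hz, (lt_floor_div_add_one_mul hL z).le⟩)

lemma volterraSol_eqOn_volterraMap (hL : 0 < L) (hK : ∀ t < L, K t = 0) :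
    EqOn (volterraSol g K L) (volterraMap g K (volterraSol g K L)) (Ici 0) := fun z hz => by
  set n := ⌊z / L⌋₊
  have hz' : z ∈ Icc 0 ((n + 1) * L) := ⟨hz, (lt_floor_div_add_one_mul hL z).le⟩
  have hz'' : z ∈ Icc 0 (((n + 1 : ℕ) + 1) * L) := ⟨hz, by push_cast; linarith [hz'.2]⟩
  calc volterraSol g K L z = (volterraMap g K)^[n + 1 + 1] g z :=
        volterraSol_eqOn_iterate hL hK _ hz''
    _ = volterraMap g K ((volterraMap g K)^[n + 1] g) z := by rw [Function.iterate_succ_apply']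
    _ = volterraMap g K (volterraSol g K L) z :=
      volterraMap_eqOn_of_eqOn hK (volterraSol_eqOn_iterate hL hK n).symm
        ⟨hz, by linarith [hz'.2]⟩

end Volterra

section Buchstab

variable {ω : ℝ → ℝ} {a : ℝ}

noncomputable def buchstabKernel (ω : ℝ → ℝ) (a t : ℝ) : ℝ :=
  1 / a * ω ((Real.exp t - 1) / a)

lemma one_le_exp_sub_one_div_iff (ha : 0 < a) {t : ℝ} :
    1 ≤ (Real.exp t - 1) / a ↔ Real.log (a + 1) ≤ t := by
  rw [one_le_div ha, Real.log_le_iff_le_exp (by linarith)]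
  constructor <;> intro h <;> linarith

lemma buchstabKernel_eq_zero (hω : ∀ u < 1, ω u = 0) (ha : 0 < a) {t : ℝ}
    (ht : t < Real.log (a + 1)) : buchstabKernel ω a t = 0 := by
  rw [buchstabKernel, hω _ (not_le.mp fun h => (one_le_exp_sub_one_div_iff ha).mp h |>.not_gt ht),
    mul_zero]

lemma continuousOn_buchstabKernel (hω : ContinuousOn ω (Ici 1)) (ha : 0 < a) :
    ContinuousOn (buchstabKernel ω a) (Ici (Real.log (a + 1))) :=
  continuousOn_const.mul <| hω.comp (by fun_prop) fun _ ht =>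
    (one_le_exp_sub_one_div_iff ha).mpr ht

lemma isFa_iff {F : ℝ → ℝ} : IsFa ω a F ↔
    ContinuousOn F (Ici 0) ∧ EqOn F (volterraMap 1 (buchstabKernel ω a) F) (Ici 0) := by
  refine and_congr_right fun _ => forall₂_congr fun z _ => ?_
  simp only [volterraMap, buchstabKernel, Pi.one_apply, ← intervalIntegral.integral_const_mul,
    mul_left_comm]

end Buchstab

theorem stmt15 (ω : ℝ → ℝ) (hω : IsBuchstab ω) (a : ℝ) (ha : 1 ≤ a) :
    (∃ F : ℝ → ℝ, IsFa ω a F) ∧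
      (∀ F G : ℝ → ℝ, IsFa ω a F → IsFa ω a G → Set.EqOn F G (Set.Ici 0)) ∧
      ∀ F : ℝ → ℝ, IsFa ω a F → ∀ z ∈ Set.Icc (0 : ℝ) (Real.log (a + 1)), F z = 1 := by
  have ha₀ : 0 < a := by linarith
  have hL : 0 < Real.log (a + 1) := Real.log_pos (by linarith)
  have hK := fun t => buchstabKernel_eq_zero (t := t) hω.1 ha₀
  have hKc := continuousOn_buchstabKernel hω.2.2.2 ha₀
  refine ⟨⟨volterraSol 1 (buchstabKernel ω a) (Real.log (a + 1)), isFa_iff.mpr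
      ⟨continuousOn_volterraSol hL hK hKc continuous_const,
        volterraSol_eqOn_volterraMap hL hK⟩⟩, fun F G hF hG => ?_, fun F hF z hz => ?_⟩
  · exact eqOn_of_eqOn_volterraMap hL hK (isFa_iff.mp hF).2 (isFa_iff.mp hG).2
  · rw [(isFa_iff.mp hF).2 hz.1]
    exact volterraMap_eqOn_Icc_zero hK F hz
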